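/- arXiv:1906.04339 — 2 statements merged into one kernel-verified Lean document; each statement's English description precedes it below -/
import Mathlib

section
/- For every integer n ≥ 3, the multiplicative degree-Kirchhoff index of G_n, which equals 2|E(G_n)| times the sum of the reciprocals of the nonzero normalized Laplacian eigenvalues of G_n, satisfies Kf*(G_n) = 10n·( ∑_{i=1}^{n−1} 5/(8·sin²(iπ/n)) + 5n/6 ) = (25n³ + 100n² − 25n)/12. -/
/-!
The only nontrivial input is `∑_{k=1}^{n-1} csc²(kπ/n) = (n² - 1)/3`. For `u = ζ^k ≠ 1`, with `ζ`
a primitive `n`-th root of unity, telescoping gives `(1 - u) · ∑_{j<n} j u^j = -n`, and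
`|1 - ζ^k|² = 4 sin²(kπ/n)`; so `csc²(kπ/n) = 4 |∑_{j<n} j ζ^{kj}|² / n²`. Summing over `k`,
Parseval for the discrete Fourier transform of `j ↦ j` (minus its `k = 0` term `(∑ j)²`) gives
`n ∑ j² - (∑ j)² = n²(n² - 1)/12`.
-/

open Finset

lemma one_sub_mul_sum_range_natCast_mul_pow {R : Type*} [CommRing R] (u : R) (n : ℕ) :
    (1 - u) * ∑ j ∈ range n, (j : R) * u ^ j = u * ∑ j ∈ range n, u ^ j - n * u ^ n := by
  induction n with
  | zero => simp
  | succ n ih =>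
    rw [sum_range_succ, mul_add, ih, sum_range_succ]
    push_cast
    ring

lemma geom_sum_eq_zero_of_pow_eq_one {R : Type*} [CommRing R] [IsDomain R] {u : R} {n : ℕ}
    (hu : u ≠ 1) (hun : u ^ n = 1) : ∑ k ∈ range n, u ^ k = 0 := by
  have h := geom_sum_mul u n
  rw [hun, sub_self] at h
  exact (mul_eq_zero.mp h).resolve_right (sub_ne_zero.mpr hu)

lemma one_sub_mul_sum_range_natCast_mul_pow_of_pow_eq_one {R : Type*} [CommRing R] [IsDomain R]
    {u : R} {n : ℕ} (hu : u ≠ 1) (hun : u ^ n = 1) :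
    (1 - u) * ∑ j ∈ range n, (j : R) * u ^ j = -n := by
  rw [one_sub_mul_sum_range_natCast_mul_pow, geom_sum_eq_zero_of_pow_eq_one hu hun, hun]
  ring

lemma IsPrimitiveRoot.sum_range_pow_div_pow_pow {K : Type*} [Field K] {ζ : K} {n i j : ℕ}
    (hζ : IsPrimitiveRoot ζ n) (hi : i < n) (hj : j < n) :
    ∑ k ∈ range n, (ζ ^ i / ζ ^ j) ^ k = if i = j then (n : K) else 0 := by
  have hζj : ζ ^ j ≠ 0 := pow_ne_zero _ (hζ.ne_zero (by omega))
  split_ifs with hij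
  · simp [hij, div_self hζj]
  · refine geom_sum_eq_zero_of_pow_eq_one (fun h ↦ hij ?_) ?_
    · exact hζ.pow_inj hi hj ((div_eq_one_iff_eq hζj).mp h)
    · rw [div_pow, ← pow_mul, ← pow_mul, mul_comm i, mul_comm j, pow_mul, pow_mul, hζ.pow_eq_one]
      simp

theorem IsPrimitiveRoot.sum_range_normSq_sum_range_mul_pow {ζ : ℂ} {n : ℕ}
    (hζ : IsPrimitiveRoot ζ n) (a : ℕ → ℂ) :
    ∑ k ∈ range n, Complex.normSq (∑ j ∈ range n, a j * (ζ ^ k) ^ j) =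
      n * ∑ j ∈ range n, Complex.normSq (a j) := by
  rcases Nat.eq_zero_or_pos n with rfl | hn
  · simp
  have hconj : starRingEnd ℂ ζ = ζ⁻¹ :=
    (Complex.inv_eq_conj (Complex.norm_eq_one_of_pow_eq_one hζ.pow_eq_one hn.ne')).symm
  apply Complex.ofReal_injective
  push_cast
  calc ∑ k ∈ range n, ((Complex.normSq (∑ j ∈ range n, a j * (ζ ^ k) ^ j) : ℝ) : ℂ)
      = ∑ i ∈ range n, ∑ j ∈ range n,
          a i * starRingEnd ℂ (a j) * ∑ k ∈ range n, (ζ ^ i / ζ ^ j) ^ k := by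
        simp_rw [← Complex.mul_conj, map_sum, map_mul, map_pow, hconj, sum_mul_sum, mul_sum]
        rw [sum_comm]
        refine sum_congr rfl fun i _ ↦ ?_
        rw [sum_comm]
        refine sum_congr rfl fun j _ ↦ sum_congr rfl fun k _ ↦ ?_
        ring
    _ = n * ∑ i ∈ range n, ((Complex.normSq (a i) : ℝ) : ℂ) := by
        rw [mul_sum]
        refine sum_congr rfl fun i hi ↦ ?_
        rw [sum_congr rfl fun j hj ↦ by
          rw [hζ.sum_range_pow_div_pow_pow (mem_range.mp hi) (mem_range.mp hj), mul_ite, mul_zero]]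
        rw [sum_ite_eq, if_pos hi, Complex.mul_conj]
        ring

lemma sum_range_natCast_id (n : ℕ) : ∑ j ∈ range n, (j : ℝ) = n * (n - 1) / 2 := by
  induction n with
  | zero => simp
  | succ n ih => rw [sum_range_succ, ih]; push_cast; ring

lemma sum_range_natCast_sq (n : ℕ) :
    ∑ j ∈ range n, (j : ℝ) ^ 2 = n * (n - 1) * (2 * n - 1) / 6 := by
  induction n with
  | zero => simp
  | succ n ih => rw [sum_range_succ, ih]; push_cast; ring

lemma sum_Ico_normSq_sum_range_natCast_mul_pow {ζ : ℂ} {n : ℕ} (hζ : IsPrimitiveRoot ζ n) :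
    ∑ k ∈ Ico 1 n, Complex.normSq (∑ j ∈ range n, (j : ℂ) * (ζ ^ k) ^ j) =
      (n : ℝ) ^ 2 * (n ^ 2 - 1) / 12 := by
  rcases Nat.eq_zero_or_pos n with rfl | hn
  · simp
  have parseval := hζ.sum_range_normSq_sum_range_mul_pow (fun j ↦ (j : ℂ))
  rw [sum_range_eq_add_Ico _ hn] at parseval
  simp only [pow_zero, one_pow, mul_one, Complex.normSq_natCast] at parseval
  have hsum : ∑ j ∈ range n, (j : ℂ) = ((n * (n - 1) / 2 : ℝ) : ℂ) := by
    rw [← sum_range_natCast_id]; push_cast; rfl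
  simp_rw [hsum, Complex.normSq_ofReal, ← sq, sum_range_natCast_sq] at parseval
  linear_combination parseval

lemma Complex.normSq_one_sub_exp_two_pi_I_div_pow (n k : ℕ) :
    Complex.normSq (1 - Complex.exp (2 * Real.pi * Complex.I / n) ^ k) =
      4 * Real.sin (k * Real.pi / n) ^ 2 := by
  have hpow : Complex.exp (2 * Real.pi * Complex.I / n) ^ k =
      Complex.exp (Complex.I * ((2 * k * Real.pi / n : ℝ) : ℂ)) := by
    rw [← Complex.exp_nat_mul]; push_cast; ring_nf
  rw [hpow, Complex.normSq_eq_norm_sq, norm_sub_rev, Complex.norm_exp_I_mul_ofReal_sub_one,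
    Real.norm_eq_abs, sq_abs]
  ring_nf

theorem sum_Ico_inv_sin_sq_mul_pi_div (n : ℕ) (hn : 0 < n) :
    ∑ k ∈ Ico 1 n, (Real.sin (k * Real.pi / n) ^ 2)⁻¹ = ((n : ℝ) ^ 2 - 1) / 3 := by
  set ζ := Complex.exp (2 * Real.pi * Complex.I / n)
  have hζ : IsPrimitiveRoot ζ n := Complex.isPrimitiveRoot_exp n hn.ne'
  have hterm : ∀ k ∈ Ico 1 n, (Real.sin (k * Real.pi / n) ^ 2)⁻¹ =
      4 / n ^ 2 * Complex.normSq (∑ j ∈ range n, (j : ℂ) * (ζ ^ k) ^ j) := by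
    intro k hk
    obtain ⟨hk1, hkn⟩ := mem_Ico.mp hk
    have hroot := one_sub_mul_sum_range_natCast_mul_pow_of_pow_eq_one
      (hζ.pow_ne_one_of_pos_of_lt (by omega) hkn)
      (by rw [← pow_mul, mul_comm, pow_mul, hζ.pow_eq_one, one_pow])
    have hnormSq := congrArg Complex.normSq hroot
    rw [map_mul, Complex.normSq_one_sub_exp_two_pi_I_div_pow, Complex.normSq_neg,
      Complex.normSq_natCast] at hnormSq
    have hn' : (n : ℝ) ≠ 0 := by positivity
    have hsin : Real.sin (k * Real.pi / n) ≠ 0 := fun h ↦ by simp [h, hn'] at hnormSq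
    field_simp
    linarith
  rw [sum_congr rfl hterm, ← mul_sum, sum_Ico_normSq_sum_range_natCast_mul_pow hζ]
  field_simp
  ring

theorem mulDegKirchhoffIndex_Gn_general (n : ℕ) :
    10 * (n : ℝ) *
        ((∑ i ∈ Finset.Ico 1 n, 5 / (8 * Real.sin (i * Real.pi / n) ^ 2)) + 5 * n / 6) =
      (25 * (n : ℝ) ^ 3 + 100 * n ^ 2 - 25 * n) / 12 := by
  rcases Nat.eq_zero_or_pos n with rfl | hn
  · simp
  have hfactor : ∑ i ∈ Ico 1 n, 5 / (8 * Real.sin (i * Real.pi / n) ^ 2) =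
      5 / 8 * ∑ i ∈ Ico 1 n, (Real.sin (i * Real.pi / n) ^ 2)⁻¹ := by
    rw [mul_sum]
    exact sum_congr rfl fun i _ ↦ by field_simp
  rw [hfactor, sum_Ico_inv_sin_sq_mul_pi_div n hn]
  ring

/-- For every integer `n ≥ 3`, the multiplicative degree-Kirchhoff index of
`G_n = P₂ ⊠ C_n`, i.e. twice the number of edges `2·5n = 10n` times the sum of the reciprocals
of the nonzero normalized Laplacian eigenvalues `(8/5)·sin²(iπ/n)` (`i = 1, …, n−1`) and `6/5`
(with multiplicity `n`), equals `(25n³ + 100n² − 25n)/12`. -/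
theorem mulDegKirchhoffIndex_Gn (n : ℕ) (hn : 3 ≤ n) :
    10 * (n : ℝ) *
        ((∑ i ∈ Finset.Ico 1 n, 5 / (8 * Real.sin (i * Real.pi / n) ^ 2)) + 5 * n / 6) =
      (25 * (n : ℝ) ^ 3 + 100 * n ^ 2 - 25 * n) / 12 :=
  mulDegKirchhoffIndex_Gn_general n
end

section
/- Let n ≥ 3 and 0 ≤ r ≤ n. The Kirchhoff index of any graph G_n^r obtained from G_n by deleting r vertical edges, which equals |V(G_n^r)| times the sum of the reciprocals of its nonzero Laplacian eigenvalues, satisfies Kf(G_n^r) = 2n·( ∑_{i=1}^{n−1} 1/(8·sin²(iπ/n)) + (n−r)/6 + r/4 ) = (n³ + 4n² + (2r−1)n)/12. -/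
/-!
Let `ζ` be a primitive `n`-th root of unity. For `z ≠ 1` with `z ^ n = 1`, the polynomial
`A z = ∑_{j<n} j z^j` takes the value `n / (z - 1)`, and for `ζ = exp(2πi/n)` one has
`(1 - ζ^k)(1 - ζ^{-k}) = 4 sin²(kπ/n)`. Parseval's identity for the discrete Fourier transform,
`∑_{k<n} A(ζ^k) A(ζ^{-k}) = n ∑_{j<n} j²`, with the term `A(1)² = (∑_{j<n} j)²` split off,
therefore gives `∑_{k=1}^{n-1} 1 / sin²(kπ/n) = (n² - 1)/3`; the Kirchhoff index is linear in
this sum.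
-/

open Finset
open scoped Real

lemma sub_one_mul_sum_range_natCast_mul_pow_add {R : Type*} [CommRing R] (z : R) (n : ℕ) :
    (z - 1) * ∑ j ∈ range n, (j : R) * z ^ j + z * ∑ j ∈ range n, z ^ j = n * z ^ n := by
  induction n with
  | zero => simp
  | succ n ih =>
    rw [sum_range_succ, sum_range_succ]
    push_cast
    linear_combination ih

lemma natCast_mul_sum_range_sq_sub_sq_sum_range {R : Type*} [CommRing R] (n : ℕ) :
    12 * ((n : R) * ∑ j ∈ range n, (j : R) ^ 2 - (∑ j ∈ range n, (j : R)) ^ 2) =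
      n ^ 2 * (n ^ 2 - 1) := by
  have gauss : ∀ m : ℕ, 2 * ∑ j ∈ range m, (j : R) = m * (m - 1) := by
    intro m
    induction m with
    | zero => simp
    | succ m ih => rw [sum_range_succ, mul_add, ih]; push_cast; ring
  have squares : ∀ m : ℕ, 6 * ∑ j ∈ range m, (j : R) ^ 2 = m * (m - 1) * (2 * m - 1) := by
    intro m
    induction m with
    | zero => simp
    | succ m ih => rw [sum_range_succ, mul_add, ih]; push_cast; ring
  linear_combination
    2 * (n : R) * squares n - 3 * (2 * ∑ j ∈ range n, (j : R) + n * (n - 1)) * gauss n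

section RootsOfUnity

variable {K : Type*} [Field K]

lemma sum_range_natCast_mul_pow_of_pow_eq_one {z : K} {n : ℕ} (hzn : z ^ n = 1) (hz1 : z ≠ 1) :
    ∑ j ∈ range n, (j : K) * z ^ j = n / (z - 1) := by
  have hgeom : ∑ j ∈ range n, z ^ j = 0 := by rw [geom_sum_eq hz1, hzn, sub_self, zero_div]
  have h := sub_one_mul_sum_range_natCast_mul_pow_add z n
  rw [hgeom, hzn, mul_zero, add_zero, mul_one] at h
  rw [eq_div_iff (sub_ne_zero.mpr hz1), mul_comm, h]

lemma IsPrimitiveRoot.geom_sum_pow_mul_inv_pow_eq_ite {ζ : K} {n j l : ℕ}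
    (hζ : IsPrimitiveRoot ζ n) (hj : j < n) (hl : l < n) :
    ∑ k ∈ range n, (ζ ^ j * (ζ ^ l)⁻¹) ^ k = if j = l then (n : K) else 0 := by
  have hζl : ζ ^ l ≠ 0 := pow_ne_zero _ (hζ.ne_zero (by omega))
  split_ifs with hjl
  · simp [hjl, hζl]
  · have hw : ζ ^ j * (ζ ^ l)⁻¹ ≠ 1 := fun h =>
      hjl (hζ.pow_inj hj hl ((mul_inv_eq_one₀ hζl).mp h))
    rw [geom_sum_eq hw, mul_pow, inv_pow, ← pow_mul, ← pow_mul, mul_comm j, mul_comm l, pow_mul,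
      pow_mul, hζ.pow_eq_one, one_pow, one_pow, inv_one, mul_one, sub_self, zero_div]

theorem IsPrimitiveRoot.sum_range_sum_mul_pow_mul_sum_mul_inv_pow {ζ : K} {n : ℕ}
    (hζ : IsPrimitiveRoot ζ n) (c d : ℕ → K) :
    ∑ k ∈ range n, (∑ j ∈ range n, c j * (ζ ^ k) ^ j) * ∑ l ∈ range n, d l * (ζ ^ k)⁻¹ ^ l =
      n * ∑ j ∈ range n, c j * d j := by
  calc _ = ∑ j ∈ range n, ∑ l ∈ range n,
          c j * d l * ∑ k ∈ range n, (ζ ^ j * (ζ ^ l)⁻¹) ^ k := by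
        simp_rw [sum_mul_sum, mul_sum]
        rw [sum_comm]
        refine sum_congr rfl fun j _ => ?_
        rw [sum_comm]
        refine sum_congr rfl fun l _ => sum_congr rfl fun k _ => ?_
        rw [mul_pow, inv_pow, inv_pow, ← pow_mul, ← pow_mul, ← pow_mul, ← pow_mul, mul_comm k j,
          mul_comm k l]
        ring
    _ = ∑ j ∈ range n, ∑ l ∈ range n, c j * d l * if j = l then (n : K) else 0 := by
        refine sum_congr rfl fun j hj => sum_congr rfl fun l hl => ?_
        rw [hζ.geom_sum_pow_mul_inv_pow_eq_ite (mem_range.mp hj) (mem_range.mp hl)]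
    _ = n * ∑ j ∈ range n, c j * d j := by
        simp_rw [mul_ite, mul_zero, sum_ite_eq, mul_sum]
        exact sum_congr rfl fun j hj => by rw [if_pos hj, mul_comm]

theorem IsPrimitiveRoot.sum_Ico_one_div_one_sub_pow_mul_one_sub_inv_pow [CharZero K] {ζ : K}
    {n : ℕ} (hζ : IsPrimitiveRoot ζ n) (hn : n ≠ 0) :
    ∑ k ∈ Ico 1 n, 1 / ((1 - ζ ^ k) * (1 - (ζ ^ k)⁻¹)) = ((n : K) ^ 2 - 1) / 12 := by
  set A : K → K := fun z => ∑ j ∈ range n, (j : K) * z ^ j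
  have hA : ∀ k ∈ Ico 1 n,
      A (ζ ^ k) * A (ζ ^ k)⁻¹ = n ^ 2 * (1 / ((1 - ζ ^ k) * (1 - (ζ ^ k)⁻¹))) := by
    intro k hk
    obtain ⟨hk1, hkn⟩ := mem_Ico.mp hk
    have hpow : (ζ ^ k) ^ n = 1 := by rw [← pow_mul, mul_comm, pow_mul, hζ.pow_eq_one, one_pow]
    have hne : ζ ^ k ≠ 1 := hζ.pow_ne_one_of_pos_of_lt (by omega) hkn
    simp only [A]
    rw [sum_range_natCast_mul_pow_of_pow_eq_one hpow hne,
      sum_range_natCast_mul_pow_of_pow_eq_one (by rw [inv_pow, hpow, inv_one]) (inv_ne_one.mpr hne),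
      div_mul_div_comm, mul_one_div, sq]
    congr 1
    ring
  have parseval : ∑ k ∈ range n, A (ζ ^ k) * A (ζ ^ k)⁻¹ = n * ∑ j ∈ range n, (j : K) * j :=
    hζ.sum_range_sum_mul_pow_mul_sum_mul_inv_pow _ _
  rw [sum_range_eq_add_Ico _ (Nat.pos_of_ne_zero hn), sum_congr rfl hA, ← mul_sum] at parseval
  have var := natCast_mul_sum_range_sq_sub_sq_sum_range (R := K) n
  simp only [A, pow_zero, inv_one, one_pow, mul_one, ← pow_two] at parseval
  apply mul_left_cancel₀ (pow_ne_zero 2 (Nat.cast_ne_zero.mpr hn : (n : K) ≠ 0))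
  linear_combination parseval + var / 12

end RootsOfUnity

lemma Complex.one_sub_exp_mul_one_sub_inv_exp (θ : ℝ) :
    (1 - exp (θ * I)) * (1 - (exp (θ * I))⁻¹) = ((4 * Real.sin (θ / 2) ^ 2 : ℝ) : ℂ) := by
  have hcos : exp (θ * I) + (exp (θ * I))⁻¹ = 2 * cos θ := by
    rw [← exp_neg, two_cos, neg_mul]
  have hhalf : cos θ = 1 - 2 * sin (θ / 2) ^ 2 := by
    have h := cos_two_mul ((θ : ℂ) / 2)
    rw [mul_div_cancel₀ _ two_ne_zero] at h
    linear_combination h + 2 * sin_sq_add_cos_sq ((θ : ℂ) / 2)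
  push_cast
  linear_combination -hcos + mul_inv_cancel₀ (exp_ne_zero (θ * I)) - 2 * hhalf

theorem Real.sum_Ico_one_div_sin_sq (n : ℕ) (hn : n ≠ 0) :
    ∑ k ∈ Ico 1 n, 1 / sin (k * π / n) ^ 2 = ((n : ℝ) ^ 2 - 1) / 3 := by
  have hζ := Complex.isPrimitiveRoot_exp n hn
  have hterm : ∀ k : ℕ, ((1 / sin (k * π / n) ^ 2 : ℝ) : ℂ) =
      4 * (1 / ((1 - Complex.exp (2 * π * Complex.I / n) ^ k) *
        (1 - (Complex.exp (2 * π * Complex.I / n) ^ k)⁻¹))) := by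
    intro k
    have hθ : (k : ℂ) * (2 * π * Complex.I / n) = ((2 * k * π / n : ℝ) : ℂ) * Complex.I := by
      push_cast
      ring
    rw [← Complex.exp_nat_mul, hθ, Complex.one_sub_exp_mul_one_sub_inv_exp,
      show 2 * k * π / n / 2 = k * π / n by ring]
    push_cast
    ring
  apply Complex.ofReal_injective
  rw [Complex.ofReal_sum, sum_congr rfl fun k _ => hterm k, ← mul_sum,
    hζ.sum_Ico_one_div_one_sub_pow_mul_one_sub_inv_pow hn]
  push_cast
  ring

theorem kirchhoffIndex_Gn_del_general (n r : ℕ) (hn : 3 ≤ n) :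
    2 * (n : ℝ) *
        ((∑ i ∈ Finset.Ico 1 n, 1 / (8 * Real.sin (i * Real.pi / n) ^ 2)) +
          ((n : ℝ) - r) / 6 + r / 4) =
      ((n : ℝ) ^ 3 + 4 * n ^ 2 + (2 * r - 1) * n) / 12 := by
  have hsum : ∑ i ∈ Ico 1 n, 1 / (8 * Real.sin (i * π / n) ^ 2) = ((n : ℝ) ^ 2 - 1) / 24 := by
    simp_rw [one_div, mul_inv, ← mul_sum, ← one_div, Real.sum_Ico_one_div_sin_sq n (by omega)]
    ring
  rw [hsum]
  ring

/-- Let `n ≥ 3` and `0 ≤ r ≤ n`. The Kirchhoff index of any graph `G_n^r`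
obtained from `G_n = P₂ ⊠ C_n` by deleting `r` vertical edges, i.e. the number of vertices `2n`
times the sum of the reciprocals of its nonzero Laplacian eigenvalues `8·sin²(iπ/n)`
(`i = 1, …, n−1`), `4` (with multiplicity `r`) and `6` (with multiplicity `n−r`), equals
`(n³ + 4n² + (2r−1)n)/12`. -/
theorem kirchhoffIndex_Gn_del (n r : ℕ) (hn : 3 ≤ n) (hr : r ≤ n) :
    2 * (n : ℝ) *
        ((∑ i ∈ Finset.Ico 1 n, 1 / (8 * Real.sin (i * Real.pi / n) ^ 2)) +
          ((n : ℝ) - r) / 6 + r / 4) =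
      ((n : ℝ) ^ 3 + 4 * n ^ 2 + (2 * r - 1) * n) / 12 :=
  kirchhoffIndex_Gn_del_general n r hn
end
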